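/- Let f : ℝ^d → ℝ be differentiable, L-smooth, and μ-PL (f(x) − inf f ≤ (1/(2μ))‖∇f(x)‖²), equal to the average of convex L_i-smooth functions f_i with L_max = max L_i, and let x* minimize f with σ* = (1/n)∑‖∇f_i(x*)‖². For SGD with constant stepsize 0 < α ≤ μ/(2L L_max) and uniformly random index i_t, the expected optimality gap satisfies E[f(x_t)] − inf f ≤ (1 − αμ)^t (f(x_0) − inf f) + (αL/μ)·σ*. -/

import Mathlib

/-!
Averaging the descent lemma for the `L`-smooth `f` over the step `x - α ∇fᵢ x` gives
`𝔼ᵢ f(x⁺) ≤ f x - α ‖∇f x‖² + (L α² / 2) 𝔼ᵢ ‖∇fᵢ x‖²`. Cocoercivity of the convex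
`Lmax`-smooth `fᵢ`, together with `𝔼ᵢ ∇fᵢ x* = ∇f x* = 0`, bounds the second moment by
`4 Lmax (f x - f*) + 2 σ*` (variance transfer), and the PL inequality bounds `‖∇f x‖²` below by
`2 μ (f x - f*)`. Under `2 L Lmax α ≤ μ` this yields the contraction
`e⁺ ≤ (1 - αμ) e + L α² σ*` of the expected gap, which unrolls to the claim because
`L α² σ* / (αμ) = αLσ*/μ`. Unrolling needs `αμ < 1`: smoothness and PL force `μ ≤ L ≤ Lmax`
unless `f` is constant, and then `αμ ≤ μ² / (2 L Lmax) ≤ 1/2`.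
-/

/-- The SGD trajectory as a function of the (finite) sequence of sampled indices. -/
noncomputable def sgdTraj {d n : ℕ}
    (upd : Fin n → EuclideanSpace ℝ (Fin d) → EuclideanSpace ℝ (Fin d))
    (x0 : EuclideanSpace ℝ (Fin d)) :
    (t : ℕ) → (Fin t → Fin n) → EuclideanSpace ℝ (Fin d)
  | 0, _ => x0
  | (t + 1), ω => upd (ω (Fin.last t)) (sgdTraj upd x0 t (fun s => ω s.castSucc))

open Finset Set
open scoped BigOperators Gradient RealInnerProductSpace

section Smoothness

variable {E : Type*} [NormedAddCommGroup E] [InnerProductSpace ℝ E] [CompleteSpace E]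

def LipschitzGradient (C : ℝ) (f : E → ℝ) : Prop :=
  ∀ x y, ‖∇ f x - ∇ f y‖ ≤ C * ‖x - y‖

theorem LipschitzGradient.mono {f : E → ℝ} {C C' : ℝ} (hf : LipschitzGradient C f) (hC : C ≤ C') :
    LipschitzGradient C' f :=
  fun x y => (hf x y).trans (by gcongr)

theorem LipschitzGradient.nonneg [Nontrivial E] {f : E → ℝ} {C : ℝ} (hf : LipschitzGradient C f) :
    0 ≤ C := by
  obtain ⟨v, hv⟩ := exists_ne (0 : E)
  have := (norm_nonneg _).trans (hf v 0)
  rwa [sub_zero, mul_nonneg_iff_of_pos_right (norm_pos_iff.2 hv)] at this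

theorem inner_gradient_eq_fderiv (f : E → ℝ) (x v : E) : ⟪∇ f x, v⟫ = fderiv ℝ f x v :=
  InnerProductSpace.toDual_symm_apply

theorem hasDerivAt_comp_add_smul {f : E → ℝ} (hf : Differentiable ℝ f) (x v : E) (t : ℝ) :
    HasDerivAt (fun s : ℝ => f (x + s • v)) ⟪∇ f (x + t • v), v⟫ t := by
  rw [inner_gradient_eq_fderiv]
  have hline : HasDerivAt (fun s : ℝ => x + s • v) v t := by
    simpa using ((hasDerivAt_id t).smul_const v).const_add x
  exact (hf _).hasFDerivAt.comp_hasDerivAt t hline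

theorem LipschitzGradient.le_add_inner_add_sq_norm {f : E → ℝ} {C : ℝ} (hf : Differentiable ℝ f)
    (hC : LipschitzGradient C f) (x y : E) :
    f y ≤ f x + ⟪∇ f x, y - x⟫ + C / 2 * ‖y - x‖ ^ 2 := by
  set v := y - x
  let φ : ℝ → ℝ := fun t => f (x + t • v) - t * ⟪∇ f x, v⟫ - C / 2 * t ^ 2 * ‖v‖ ^ 2
  have hφ : ∀ t, HasDerivAt φ (⟪∇ f (x + t • v) - ∇ f x, v⟫ - C * t * ‖v‖ ^ 2) t := by
    intro t
    refine (((hasDerivAt_comp_add_smul hf x v t).sub ((hasDerivAt_id t).mul_const _)).sub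
      (((hasDerivAt_pow 2 t).const_mul (C / 2)).mul_const (‖v‖ ^ 2))).congr_deriv ?_
    rw [inner_sub_left]
    simp only [Nat.cast_ofNat]
    ring
  have hslope : ∀ t, 0 ≤ t → ⟪∇ f (x + t • v) - ∇ f x, v⟫ ≤ C * t * ‖v‖ ^ 2 := fun t ht =>
    calc _ ≤ ‖∇ f (x + t • v) - ∇ f x‖ * ‖v‖ := real_inner_le_norm _ _
      _ ≤ C * ‖t • v‖ * ‖v‖ := by gcongr; simpa using hC (x + t • v) x
      _ = C * t * ‖v‖ ^ 2 := by rw [norm_smul, Real.norm_of_nonneg ht]; ring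
  have hanti : AntitoneOn φ (Icc 0 1) :=
    antitoneOn_of_hasDerivWithinAt_nonpos (convex_Icc 0 1)
      (HasDerivAt.continuousOn fun t _ => hφ t) (fun t _ => (hφ t).hasDerivWithinAt)
      (fun t ht => by rw [interior_Icc] at ht; linarith [hslope t ht.1.le])
  have := hanti (left_mem_Icc.2 zero_le_one) (right_mem_Icc.2 zero_le_one) zero_le_one
  simp only [φ, v, zero_smul, one_smul, add_zero, add_sub_cancel] at this
  linarith

theorem ConvexOn.add_inner_gradient_le {f : E → ℝ} (hconv : ConvexOn ℝ univ f)
    (hf : Differentiable ℝ f) (x y : E) : f x + ⟪∇ f x, y - x⟫ ≤ f y := by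
  have hline : (f ∘ AffineMap.lineMap x y) = fun t : ℝ => f (x + t • (y - x)) := by
    ext t; simp [AffineMap.lineMap_apply_module', add_comm]
  have hconv' := hconv.comp_affineMap (AffineMap.lineMap x y)
  rw [hline, preimage_univ] at hconv'
  have hderiv := hasDerivAt_comp_add_smul hf x (y - x) 0
  rw [zero_smul, add_zero] at hderiv
  have := hconv'.le_slope_of_hasDerivAt (mem_univ 0) (mem_univ 1) zero_lt_one hderiv
  simp only [slope_def_field, zero_smul, add_zero, one_smul, add_sub_cancel, sub_zero,
    div_one] at this
  linarith

theorem LipschitzGradient.sq_norm_sub_gradient_le {f : E → ℝ} {C : ℝ} (hf : Differentiable ℝ f)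
    (hC : LipschitzGradient C f) (hCpos : 0 < C) {y : E}
    (hy : ∀ z, f y + ⟪∇ f y, z - y⟫ ≤ f z) (x : E) :
    ‖∇ f x - ∇ f y‖ ^ 2 ≤ 2 * C * (f x - f y - ⟪∇ f y, x - y⟫) := by
  set g := ∇ f x - ∇ f y
  -- Compare the descent bound at `x - C⁻¹ g` with the tangent plane at `y`.
  have hup := hC.le_add_inner_add_sq_norm hf x (x - C⁻¹ • g)
  have hlow := hy (x - C⁻¹ • g)
  rw [sub_sub_cancel_left, inner_neg_right, norm_neg, norm_smul, inner_smul_right,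
    Real.norm_of_nonneg (inv_nonneg.2 hCpos.le)] at hup
  rw [sub_right_comm, inner_sub_right, inner_smul_right] at hlow
  have hg : C⁻¹ * ⟪∇ f x, g⟫ - C⁻¹ * ⟪∇ f y, g⟫ = C⁻¹ * ‖g‖ ^ 2 := by
    rw [← mul_sub, ← inner_sub_left, real_inner_self_eq_norm_sq]
  have hquad : C / 2 * (C⁻¹ * ‖g‖) ^ 2 = C⁻¹ * ‖g‖ ^ 2 / 2 := by field_simp
  have : C⁻¹ * ‖g‖ ^ 2 / 2 ≤ f x - f y - ⟪∇ f y, x - y⟫ := by linarith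
  calc ‖g‖ ^ 2 = 2 * C * (C⁻¹ * ‖g‖ ^ 2 / 2) := by field_simp
    _ ≤ _ := by gcongr

theorem IsLocalMin.gradient_eq_zero {f : E → ℝ} {m : E} (h : IsLocalMin f m) : ∇ f m = 0 := by
  rw [gradient, h.fderiv_eq_zero, map_zero]

theorem LipschitzGradient.pl_const_le {f : E → ℝ} {L μ : ℝ} {m z : E} (hf : Differentiable ℝ f)
    (hL : LipschitzGradient L f) (hLpos : 0 < L) (hmin : ∀ y, f m ≤ f y) (hμ : 0 < μ)
    (hPL : f z - f m ≤ 1 / (2 * μ) * ‖∇ f z‖ ^ 2) (hz : f m < f z) : μ ≤ L := by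
  have hm : ∇ f m = 0 := IsLocalMin.gradient_eq_zero (.of_forall hmin)
  have hcoco := hL.sq_norm_sub_gradient_le hf hLpos (y := m) (by simpa [hm] using hmin) z
  rw [hm, sub_zero, inner_zero_left, sub_zero] at hcoco
  rw [one_div_mul_eq_div, le_div_iff₀ (by positivity)] at hPL
  nlinarith

end Smoothness

section Averages

variable {E : Type*} [NormedAddCommGroup E] [InnerProductSpace ℝ E] [CompleteSpace E]
  {ι : Type*} [Fintype ι] {F : ι → E → ℝ} {f : E → ℝ}

theorem inner_gradient_expect (hF : ∀ i, Differentiable ℝ (F i)) (x v : E) :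
    ⟪∇ (fun y => 𝔼 i, F i y) x, v⟫ = 𝔼 i, ⟪∇ (F i) x, v⟫ := by
  have hD : HasFDerivAt (fun y => 𝔼 i, F i y)
      ((Fintype.card ι : ℝ)⁻¹ • ∑ i, fderiv ℝ (F i) x) x := by
    simp_rw [Fintype.expect_eq_sum_div_card, div_eq_inv_mul]
    exact (HasFDerivAt.fun_sum fun i _ => (hF i x).hasFDerivAt).const_smul (Fintype.card ι : ℝ)⁻¹
  simp_rw [inner_gradient_eq_fderiv, hD.fderiv, Fintype.expect_eq_sum_div_card]
  simp [div_eq_inv_mul]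

theorem expect_sq_norm_gradient_le {C : ℝ} {m : E} (hfF : ∀ x, f x = 𝔼 i, F i x)
    (hconv : ∀ i, ConvexOn ℝ univ (F i)) (hF : ∀ i, Differentiable ℝ (F i))
    (hC : ∀ i, LipschitzGradient C (F i)) (hCpos : 0 < C) (hm : ∇ f m = 0) (x : E) :
    𝔼 i, ‖∇ (F i) x‖ ^ 2 ≤ 4 * C * (f x - f m) + 2 * 𝔼 i, ‖∇ (F i) m‖ ^ 2 := by
  have hcenter : 𝔼 i, ⟪∇ (F i) m, x - m⟫ = 0 := by
    rw [← inner_gradient_expect hF, ← funext hfF, hm, inner_zero_left]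
  have hi : ∀ i, ‖∇ (F i) x‖ ^ 2
      ≤ 4 * C * (F i x - F i m - ⟪∇ (F i) m, x - m⟫) + 2 * ‖∇ (F i) m‖ ^ 2 := by
    intro i
    have hcoco := (hC i).sq_norm_sub_gradient_le (hF i) hCpos
      ((hconv i).add_inner_gradient_le (hF i) m) x
    have htri : ‖∇ (F i) x‖ ≤ ‖∇ (F i) x - ∇ (F i) m‖ + ‖∇ (F i) m‖ := norm_le_norm_sub_add _ _
    nlinarith [add_sq_le (a := ‖∇ (F i) x - ∇ (F i) m‖) (b := ‖∇ (F i) m‖), norm_nonneg (∇ (F i) x)]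
  calc 𝔼 i, ‖∇ (F i) x‖ ^ 2
      ≤ 𝔼 i, (4 * C * (F i x - F i m - ⟪∇ (F i) m, x - m⟫) + 2 * ‖∇ (F i) m‖ ^ 2) :=
        expect_le_expect fun i _ => hi i
    _ = 4 * C * (f x - f m) + 2 * 𝔼 i, ‖∇ (F i) m‖ ^ 2 := by
        rw [expect_add_distrib, ← mul_expect, ← mul_expect, expect_sub_distrib,
          expect_sub_distrib, hcenter, ← hfF, ← hfF, sub_zero]

theorem expect_sgd_step_sub_le [Nonempty ι] {C L μ α : ℝ} {m : E} (hfF : ∀ x, f x = 𝔼 i, F i x)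
    (hconv : ∀ i, ConvexOn ℝ univ (F i)) (hF : ∀ i, Differentiable ℝ (F i))
    (hC : ∀ i, LipschitzGradient C (F i)) (hCpos : 0 < C) (hf : Differentiable ℝ f)
    (hL : LipschitzGradient L f) (hL0 : 0 ≤ L) (hmin : ∀ z, f m ≤ f z) (hμ : 0 < μ) (x : E)
    (hPL : f x - f m ≤ 1 / (2 * μ) * ‖∇ f x‖ ^ 2) (hα : 0 ≤ α) (hαC : 2 * L * C * α ≤ μ) :
    𝔼 i, (f (x - α • ∇ (F i) x) - f m)
      ≤ (1 - α * μ) * (f x - f m) + L * α ^ 2 * 𝔼 i, ‖∇ (F i) m‖ ^ 2 := by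
  have hdesc : ∀ i, f (x - α • ∇ (F i) x) - f m
      ≤ f x - f m - α * ⟪∇ f x, ∇ (F i) x⟫ + L / 2 * α ^ 2 * ‖∇ (F i) x‖ ^ 2 := by
    intro i
    have := hL.le_add_inner_add_sq_norm hf x (x - α • ∇ (F i) x)
    rw [sub_sub_cancel_left, inner_neg_right, inner_smul_right, norm_neg, norm_smul,
      Real.norm_of_nonneg hα] at this
    linarith
  have hmean : 𝔼 i, ⟪∇ f x, ∇ (F i) x⟫ = ‖∇ f x‖ ^ 2 := by
    simp_rw [real_inner_comm _ (∇ f x)]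
    rw [← inner_gradient_expect hF, ← funext hfF, real_inner_self_eq_norm_sq]
  have hvar := expect_sq_norm_gradient_le hfF hconv hF hC hCpos
    (IsLocalMin.gradient_eq_zero (.of_forall hmin)) x
  have hgrad : 2 * μ * (f x - f m) ≤ ‖∇ f x‖ ^ 2 := by
    rwa [one_div_mul_eq_div, le_div_iff₀ (by positivity), mul_comm] at hPL
  have hgap : 0 ≤ f x - f m := sub_nonneg.2 (hmin x)
  calc 𝔼 i, (f (x - α • ∇ (F i) x) - f m)
      ≤ 𝔼 i, (f x - f m - α * ⟪∇ f x, ∇ (F i) x⟫ + L / 2 * α ^ 2 * ‖∇ (F i) x‖ ^ 2) :=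
        expect_le_expect fun i _ => hdesc i
    _ = f x - f m - α * ‖∇ f x‖ ^ 2 + L / 2 * α ^ 2 * 𝔼 i, ‖∇ (F i) x‖ ^ 2 := by
        rw [expect_add_distrib, expect_sub_distrib, ← mul_expect, ← mul_expect, hmean,
          Fintype.expect_const]
    _ ≤ (1 - α * μ) * (f x - f m) + L * α ^ 2 * 𝔼 i, ‖∇ (F i) m‖ ^ 2 := by
        nlinarith [mul_le_mul_of_nonneg_left hvar (by positivity : 0 ≤ L / 2 * α ^ 2),
          mul_le_mul_of_nonneg_left hgrad hα, mul_le_mul_of_nonneg_right hαC (mul_nonneg hα hgap)]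

end Averages

theorem le_pow_mul_add_div_of_le_mul_add {u : ℕ → ℝ} {q c : ℝ} (hq0 : 0 ≤ q) (hq1 : q < 1)
    (hc : 0 ≤ c) (h : ∀ s, u (s + 1) ≤ q * u s + c) (s : ℕ) :
    u s ≤ q ^ s * u 0 + c / (1 - q) := by
  induction s with
  | zero => simpa using div_nonneg hc (sub_nonneg.2 hq1.le)
  | succ s ih =>
    calc u (s + 1) ≤ q * (q ^ s * u 0 + c / (1 - q)) + c := by
          linarith [h s, mul_le_mul_of_nonneg_left ih hq0]
      _ = q ^ (s + 1) * u 0 + c / (1 - q) := by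
        field_simp [(sub_pos.2 hq1).ne']
        ring

theorem pos_of_le_div_two_mul_mul {μ α L M : ℝ} (hμ : 0 < μ) (hα : 0 < α) (hM : 0 ≤ M)
    (h : α ≤ μ / (2 * L * M)) : 0 < L ∧ 0 < M ∧ 2 * L * M * α ≤ μ := by
  have hLM : 0 < 2 * L * M := (div_pos_iff_of_pos_left hμ).1 (hα.trans_le h)
  have hMpos : 0 < M := lt_of_le_of_ne hM (by rintro rfl; simp at hLM)
  exact ⟨by nlinarith, hMpos, by rwa [le_div_iff₀ hLM, mul_comm] at h⟩

section Trajectory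

variable {d n : ℕ} (upd : Fin n → EuclideanSpace ℝ (Fin d) → EuclideanSpace ℝ (Fin d))
  (x0 : EuclideanSpace ℝ (Fin d))

theorem expect_sgdTraj_succ {M : Type*} [AddCommMonoid M] [Module ℚ≥0 M]
    (g : EuclideanSpace ℝ (Fin d) → M) (s : ℕ) :
    𝔼 ω : Fin (s + 1) → Fin n, g (sgdTraj upd x0 (s + 1) ω)
      = 𝔼 ω : Fin s → Fin n, 𝔼 i, g (upd i (sgdTraj upd x0 s ω)) := by
  rw [← Fintype.expect_equiv (Fin.snocEquiv fun _ => Fin n)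
    (fun p => g (upd p.1 (sgdTraj upd x0 s p.2))) _ (fun p => by simp [sgdTraj]),
    ← univ_product_univ, expect_product, expect_comm]

theorem expect_sgdTraj_le_of_expect_le [NeZero n] {V : EuclideanSpace ℝ (Fin d) → ℝ} {q c : ℝ}
    (hq0 : 0 ≤ q) (hq1 : q < 1) (hc : 0 ≤ c) (hstep : ∀ x, 𝔼 i, V (upd i x) ≤ q * V x + c)
    (t : ℕ) : 𝔼 ω : Fin t → Fin n, V (sgdTraj upd x0 t ω) ≤ q ^ t * V x0 + c / (1 - q) := by
  refine le_pow_mul_add_div_of_le_mul_add (u := fun s => 𝔼 ω, V (sgdTraj upd x0 s ω))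
    hq0 hq1 hc (fun s => ?_) t |>.trans_eq (by simp [sgdTraj])
  rw [expect_sgdTraj_succ, mul_expect, ← Fintype.expect_const (ι := Fin s → Fin n) c,
    ← expect_add_distrib]
  exact expect_le_expect fun ω _ => hstep _

end Trajectory

/-- SGD convergence under the PL condition with constant stepsize. -/
theorem sgd_pl_convergence (d n : ℕ) (hn : 0 < n)
    (μ α Lmax σstar L : ℝ) (hμ : 0 < μ)
    (fi : Fin n → EuclideanSpace ℝ (Fin d) → ℝ) (Li : Fin n → ℝ)
    (f : EuclideanSpace ℝ (Fin d) → ℝ)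
    (hf : ∀ x, f x = (∑ i, fi i x) / n)
    (hL : L = (∑ i, Li i) / n)
    (hconv : ∀ i, ConvexOn ℝ Set.univ (fi i))
    (hdiffi : ∀ i, Differentiable ℝ (fi i))
    (hdifff : Differentiable ℝ f)
    (hlipi : ∀ i x y, ‖gradient (fi i) x - gradient (fi i) y‖ ≤ Li i * ‖x - y‖)
    (hlipf : ∀ x y, ‖gradient f x - gradient f y‖ ≤ L * ‖x - y‖)
    (hLmax : IsGreatest (Set.range Li) Lmax)
    (xstar : EuclideanSpace ℝ (Fin d)) (hmin : ∀ y, f xstar ≤ f y)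
    (hPL : ∀ x, f x - f xstar ≤ 1 / (2 * μ) * ‖gradient f x‖ ^ 2)
    (hσ : σstar = (∑ i, ‖gradient (fi i) xstar‖ ^ 2) / n)
    (hα : 0 < α) (hα2 : α ≤ μ / (2 * L * Lmax))
    (x0 : EuclideanSpace ℝ (Fin d)) (t : ℕ) :
    (∑ ω : Fin t → Fin n,
        f (sgdTraj (fun i y => y - α • gradient (fi i) y) x0 t ω)) / (n : ℝ) ^ t
        - f xstar ≤
      (1 - α * μ) ^ t * (f x0 - f xstar) + (α * L / μ) * σstar := by
  have : NeZero n := ⟨hn.ne'⟩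
  have havg (g : Fin n → ℝ) : (∑ i, g i) / n = 𝔼 i, g i := by
    rw [Fintype.expect_eq_sum_div_card, Fintype.card_fin]
  simp only [havg] at hf hL hσ
  rw [show (n : ℝ) ^ t = Fintype.card (Fin t → Fin n) by simp, ← Fintype.expect_eq_sum_div_card]
  set traj := sgdTraj (fun i y => y - α • gradient (fi i) y) x0
  have hconst_case (hconst : ∀ x, f x = f xstar) (hLσ : 0 ≤ L * σstar) :
      𝔼 ω, f (traj t ω) - f xstar ≤ (1 - α * μ) ^ t * (f x0 - f xstar) + α * L / μ * σstar := by
    simp only [hconst, Fintype.expect_const, sub_self, mul_zero, zero_add]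
    rw [mul_div_right_comm, mul_assoc]
    positivity
  rcases subsingleton_or_nontrivial (EuclideanSpace ℝ (Fin d)) with hE | hE
  · refine hconst_case (fun x => congrArg f (Subsingleton.elim x xstar)) ?_
    simp [hσ, Subsingleton.elim _ (0 : EuclideanSpace ℝ (Fin d))]
  obtain ⟨j, hj⟩ := hLmax.1
  obtain ⟨hLpos, hLmaxpos, hstepsize⟩ :=
    pos_of_le_div_two_mul_mul hμ hα (hj ▸ LipschitzGradient.nonneg (hlipi j)) hα2
  have hσ0 : 0 ≤ σstar := hσ ▸ by positivity
  by_cases hconst : ∀ x, f x = f xstar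
  · exact hconst_case hconst (by positivity)
  obtain ⟨z, hz⟩ := not_forall.1 hconst
  have hμL : μ ≤ L := LipschitzGradient.pl_const_le hdifff hlipf hLpos hmin hμ (hPL z)
    (lt_of_le_of_ne (hmin z) (Ne.symm hz))
  have hLle : L ≤ Lmax := hL ▸ expect_le univ_nonempty fun i _ => hLmax.2 ⟨i, rfl⟩
  have hαμ : α * μ < 1 := by nlinarith [mul_le_mul hμL (hμL.trans hLle) hμ.le hLpos.le]
  have hstep (x) := expect_sgd_step_sub_le hf hconv hdiffi
    (fun i => LipschitzGradient.mono (hlipi i) (hLmax.2 ⟨i, rfl⟩)) hLmaxpos hdifff hlipf hLpos.le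
    hmin hμ x (hPL x) hα.le hstepsize
  have := expect_sgdTraj_le_of_expect_le _ x0 (V := fun x => f x - f xstar)
    (c := L * α ^ 2 * σstar) (by linarith) (sub_lt_self _ (mul_pos hα hμ)) (by positivity)
    (hσ ▸ hstep) t
  rw [expect_sub_distrib, Fintype.expect_const, sub_sub_cancel] at this
  convert this using 2
  field_simp
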